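/- For every k ≥ 2, the Tribonacci word t satisfies t[0..(T_{k+1}+T_{k-1}−3)/2 − 1] = t[T_k..T_k+(T_{k+1}+T_{k-1}−3)/2 − 1]; i.e., the prefix of length (T_{k+1}+T_{k-1}−3)/2 recurs at position T_k. -/
import Mathlib


/-- The Tribonacci morphism σ(0)=01, σ(1)=02, σ(2)=0. -/
def tmor (b : ℕ) : List ℕ := if b = 0 then [0, 1] else if b = 1 then [0, 2] else [0]

/-- The iterates t_k = σ^k(0) as finite words. -/
def tw : ℕ → List ℕ
  | 0 => [0]
  | (k + 1) => (tw k).flatMap tmor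

/-- The Tribonacci numbers T₀=1, T₁=2, T₂=4, T_k = T_{k-1}+T_{k-2}+T_{k-3}. -/
def T : ℕ → ℕ
  | 0 => 1
  | 1 => 2
  | 2 => 4
  | (k + 3) => T (k + 2) + T (k + 1) + T k

/-- The Tribonacci word t = σ^ω(0). -/
def tribWord (i : ℕ) : ℕ := (tw (i + 2)).getD i 0

/-- auxiliary length sequence -/
def Lf : ℕ → ℕ
  | 0 => 0
  | (k + 1) => Lf k + T k

lemma tw_rec3 : ∀ n, tw (n + 3) = tw (n + 2) ++ tw (n + 1) ++ tw n := by
  intro n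
  induction n with
  | zero => decide
  | succ m ih =>
    show (tw (m + 3)).flatMap tmor = tw (m + 3) ++ tw (m + 2) ++ tw (m + 1)
    conv_lhs => rw [ih]
    rw [List.flatMap_append, List.flatMap_append]
    rfl

lemma tw_length : ∀ n, (tw n).length = T n := by
  intro n
  induction n using Nat.strong_induction_on with
  | _ n ih =>
    match n with
    | 0 => rfl
    | 1 => rfl
    | 2 => rfl
    | (m + 3) =>
      rw [tw_rec3, T]
      simp only [List.length_append, ih m (by omega), ih (m+1) (by omega), ih (m+2) (by omega)]

lemma tw_prefix_succ : ∀ n, tw n <+: tw (n + 1) := by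
  intro n
  match n with
  | 0 => decide
  | 1 => decide
  | (m + 2) =>
    rw [tw_rec3]
    exact ⟨tw (m + 1) ++ tw m, by simp⟩

lemma tw_prefix {m n : ℕ} (h : m ≤ n) : tw m <+: tw n := by
  induction n with
  | zero => simp [Nat.le_zero.mp h]
  | succ p ih =>
    rcases Nat.lt_or_ge m (p + 1) with h' | h'
    · exact (ih (by omega)).trans (tw_prefix_succ p)
    · have : m = p + 1 := by omega
      subst this; exact List.prefix_rfl

lemma T_ge (n : ℕ) : n + 1 ≤ T n := by
  induction n using Nat.strong_induction_on with
  | _ n ih =>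
    match n with
    | 0 => decide
    | 1 => decide
    | 2 => decide
    | (m + 3) =>
      have h1 := ih (m + 2) (by omega)
      have h2 := ih (m + 1) (by omega)
      show _ ≤ T (m+2) + T (m+1) + T m
      omega

lemma getD_prefix {l₁ l₂ : List ℕ} (h : l₁ <+: l₂) {i : ℕ} (hi : i < l₁.length) :
    l₂.getD i 0 = l₁.getD i 0 := by
  rw [List.getD_eq_getElem _ _ hi, List.getD_eq_getElem _ _ (hi.trans_le h.length_le),
    h.getElem hi]

lemma trib_eq (n i : ℕ) (h : i < T n) : tribWord i = (tw n).getD i 0 := by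
  have hi2 : i < (tw (i + 2)).length := by
    rw [tw_length]; have := T_ge (i + 2); omega
  rcases Nat.le_total n (i + 2) with hn | hn
  · have hn' : i < (tw n).length := by rw [tw_length]; exact h
    exact getD_prefix (tw_prefix hn) hn'
  · exact (getD_prefix (tw_prefix hn) hi2).symm

lemma T_rec (n : ℕ) : T (n + 3) = T (n + 2) + T (n + 1) + T n := rfl

lemma T_step (n : ℕ) : T (n + 1) + T n ≤ T (n + 2) := by
  match n with
  | 0 => decide
  | (m + 1) =>
    show T (m + 2) + T (m + 1) ≤ T (m + 3)
    have h1 : T (m + 3) = T (m + 2) + T (m + 1) + T m := T_rec m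
    have := T_ge m
    omega

/-- tw (k+1) ++ tw k is a prefix of tw (k+2) -/
lemma pre2 (k : ℕ) : tw (k + 1) ++ tw k <+: tw (k + 2) := by
  match k with
  | 0 => decide
  | (m + 1) =>
    rw [tw_rec3]
    exact ⟨tw m, by simp⟩

lemma getD_app (l₁ l₂ : List ℕ) (i : ℕ) :
    (l₁ ++ l₂).getD (l₁.length + i) 0 = l₂.getD i 0 := by
  simp [List.getD_eq_getElem?_getD, List.getElem?_append_right]

/-- shift by T (k+2) works up to T (k+1) + T k -/
lemma shift₁ (k : ℕ) : ∀ i < T (k + 1) + T k, tribWord (T (k + 2) + i) = tribWord i := by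
  intro i hi
  have h3 : T (k + 2) + i < T (k + 3) := by rw [T_rec]; omega
  rw [trib_eq (k + 3) _ h3, tw_rec3, List.append_assoc, ← tw_length (k + 2), getD_app,
    trib_eq (k + 2) i (by have := T_step k; omega),
    getD_prefix (pre2 k) (by simp [tw_length]; omega)]

/-- shift: t (T(k+2) + T(k+1) + j) = t j for j < T k -/
lemma shift₂ (k : ℕ) : ∀ j < T k, tribWord (T (k + 2) + T (k + 1) + j) = tribWord j := by
  intro j hj
  have h3 : T (k + 2) + T (k + 1) + j < T (k + 3) := by rw [T_rec]; omega
  have hlen : ((tw (k + 2) ++ tw (k + 1)).length) = T (k + 2) + T (k + 1) := by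
    simp [tw_length]
  rw [trib_eq (k + 3) _ h3, tw_rec3, trib_eq k j hj]
  rw [show T (k+2) + T (k+1) + j = (tw (k+2) ++ tw (k+1)).length + j by rw [hlen], getD_app]

lemma Lf_lt_T (p : ℕ) : Lf p < T (p + 1) := by
  induction p with
  | zero => decide
  | succ m ih =>
    show Lf m + T m < T (m + 2)
    have := T_step m
    omega

/-- S from B -/
lemma S_of_B (p : ℕ)
    (hB : ∀ j < Lf p, tribWord j = tribWord (T (p + 1) + T p + j)) :
    ∀ i < Lf (p + 2), tribWord i = tribWord (T (p + 2) + i) := by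
  intro i hi
  have hLf : Lf (p + 2) = T (p + 1) + T p + Lf p := by
    show Lf (p+1) + T (p+1) = _
    show Lf p + T p + T (p+1) = _
    omega
  rcases Nat.lt_or_ge i (T (p + 1) + T p) with h | h
  · exact (shift₁ p i h).symm
  · obtain ⟨j, rfl⟩ : ∃ j, i = T (p + 1) + T p + j := ⟨i - (T (p+1) + T p), by omega⟩
    have hj : j < Lf p := by omega
    have h1 : T (p + 2) + (T (p + 1) + T p + j) = T (p + 3) + j := by rw [T_rec]; ring
    rw [h1, shift₁ (p + 1) j (by have := Lf_lt_T p; have := T_step p; omega)]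
    exact (hB j hj).symm

lemma B_base1 : ∀ j < Lf 1, tribWord j = tribWord (T 2 + T 1 + j) := by
  intro j hj
  have h1 : Lf 1 = 1 := rfl
  have hj0 : j = 0 := by omega
  subst hj0
  have h2 : T 2 + T 1 + 0 = 6 := by decide
  rw [trib_eq 5 0 (by decide), h2, trib_eq 5 6 (by decide)]
  decide

lemma B_base2 : ∀ j < Lf 2, tribWord j = tribWord (T 3 + T 2 + j) := by
  intro j hj
  have h1 : Lf 2 = 3 := by decide
  rw [h1] at hj
  have h2 : T 3 + T 2 = 11 := by decide
  rw [h2]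
  interval_cases j
  · rw [trib_eq 5 0 (by decide), trib_eq 5 11 (by decide)]; decide
  · rw [trib_eq 5 1 (by decide), trib_eq 5 12 (by decide)]; decide
  · rw [trib_eq 5 2 (by decide), trib_eq 5 13 (by decide)]; decide

lemma Bthm : ∀ m, ∀ j < Lf m, tribWord j = tribWord (T (m + 1) + T m + j) := by
  intro m
  induction m using Nat.strong_induction_on with
  | _ m ih =>
    match m with
    | 0 => intro j hj; have h0 : Lf 0 = 0 := rfl; omega
    | 1 => exact B_base1
    | 2 => exact B_base2
    | (p + 3) =>
      show ∀ j < Lf (p + 3), tribWord j = tribWord (T (p + 4) + T (p + 3) + j)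
      intro j hj
      have hLf : Lf (p + 3) = Lf (p + 2) + T (p + 2) := rfl
      rcases Nat.lt_or_ge j (T (p + 2)) with h | h
      · exact (shift₂ (p + 2) j h).symm
      · obtain ⟨j', rfl⟩ : ∃ j', j = T (p + 2) + j' := ⟨j - T (p + 2), by omega⟩
        have hj' : j' < Lf (p + 2) := by omega
        have hS := S_of_B p (ih p (by omega)) j' hj'
        have h1 : T (p + 4) + T (p + 3) + (T (p + 2) + j') = T (p + 5) + j' := by
          rw [show T (p+5) = T (p+4) + T (p+3) + T (p+2) from T_rec (p+2)]; ring
        have hb : j' < T (p + 4) + T (p + 3) := by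
          have h2 : Lf (p + 2) < T (p + 3) := Lf_lt_T (p + 2)
          omega
        rw [h1, shift₁ (p + 3) j' hb]
        exact hS.symm


/-- for every k ≥ 2, the prefix of the Tribonacci word of
length (T_{k+1}+T_{k-1}−3)/2 recurs at position T_k:
t[0..(T_{k+1}+T_{k-1}−3)/2 − 1] = t[T_k..T_k+(T_{k+1}+T_{k-1}−3)/2 − 1]. -/
theorem trib_prefix_recurs (k : ℕ) (hk : 2 ≤ k) :
    ∀ i < (T (k + 1) + T (k - 1) - 3) / 2, tribWord i = tribWord (T k + i) := by
  obtain ⟨p, rfl⟩ : ∃ p, k = p + 2 := ⟨k - 2, by omega⟩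
  have key : ∀ q, 2 * Lf (q + 2) + 3 = T (q + 3) + T (q + 1) := by
    intro q
    induction q with
    | zero => decide
    | succ r ih =>
      show 2 * Lf (r + 3) + 3 = T (r + 4) + T (r + 2)
      have h1 : Lf (r + 3) = Lf (r + 2) + T (r + 2) := rfl
      have h2 : T (r + 4) = T (r + 3) + T (r + 2) + T (r + 1) := T_rec (r + 1)
      omega
  have hL : (T (p + 2 + 1) + T (p + 2 - 1) - 3) / 2 = Lf (p + 2) := by
    have := key p
    simp only [show p + 2 + 1 = p + 3 from rfl, show p + 2 - 1 = p + 1 from rfl]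
    omega
  rw [hL]
  exact S_of_B p (Bthm p)
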